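/- arXiv:1405.7686 — 2 statements merged into one kernel-verified Lean document; each statement's English description precedes it below -/
import Mathlib

section
/- Let Y be a closed orientable smooth 11-dimensional manifold. Then the Stiefel–Whitney classes of its tangent bundle satisfy w_9(Y) = w_10(Y) = w_11(Y) = 0 in H^*(Y; Z/2). -/
/-!
By Wu's formula `w k = ∑ Sq^{k-i} ν i`, and `Sq^{k-i} ν i = 0` by instability whenever
`2 i < k`. So for `k ≥ 9` only Wu classes `ν i` with `i ≥ 5` contribute. These vanish in
dimension 11: for `i ≥ 6`, `Sq^i` is zero on `H^{11-i}` by instability, and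
`Sq^5 = Sq^1 Sq^4` on `H^6` factors through `Sq^1 : H^10 → H^11`, which is zero since `Y` is
orientable.
-/

section WuClasses

variable {A : Type*} [CommRing A] [Algebra (ZMod 2) A]

def IsWuClass (deg : ℕ → Submodule (ZMod 2) A) (Sq : ℕ → A →ₗ[ZMod 2] A) (n i : ℕ) (v : A) :
    Prop :=
  ∀ x ∈ deg (n - i), Sq i x = x * v

variable {deg : ℕ → Submodule (ZMod 2) A} {Sq : ℕ → A →ₗ[ZMod 2] A} {n i : ℕ}

theorem isWuClass_zero_of_lt_two_mul (hi : n < 2 * i)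
    (hSq_vanish : ∀ m (x : A), x ∈ deg m → ∀ j, m < j → Sq j x = 0) :
    IsWuClass deg Sq n i 0 := by
  intro x hx
  rw [mul_zero, hSq_vanish _ x hx i (by omega)]

theorem isWuClass_zero_of_eq_sq_one_comp (hi₁ : 1 ≤ i) (hin : i ≤ n)
    (hSq_deg : ∀ j m (x : A), x ∈ deg m → Sq j x ∈ deg (m + j))
    (hSq_eq : ∀ x : A, Sq i x = Sq 1 (Sq (i - 1) x))
    (hSq_one : ∀ x ∈ deg (n - 1), Sq 1 x = 0) :
    IsWuClass deg Sq n i 0 := by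
  intro x hx
  have hdeg : Sq (i - 1) x ∈ deg (n - 1) := by
    simpa only [show n - i + (i - 1) = n - 1 by omega] using hSq_deg (i - 1) _ x hx
  rw [mul_zero, hSq_eq, hSq_one _ hdeg]

theorem stiefelWhitney_eq_zero_of_wu_eq_zero {w ν : ℕ → A} {k : ℕ}
    (hν_deg : ∀ i, ν i ∈ deg i)
    (hSq_vanish : ∀ m (x : A), x ∈ deg m → ∀ j, m < j → Sq j x = 0)
    (hWuFormula : w k = ∑ i ∈ Finset.range (k + 1), Sq (k - i) (ν i))
    (hν : ∀ i, k ≤ 2 * i → i ≤ k → ν i = 0) :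
    w k = 0 := by
  rw [hWuFormula]
  refine Finset.sum_eq_zero fun i hi => ?_
  rcases lt_or_ge (2 * i) k with hik | hki
  · exact hSq_vanish i (ν i) (hν_deg i) (k - i) (by omega)
  · rw [hν i hki (Finset.mem_range_succ_iff.mp hi), map_zero]

end WuClasses

theorem ninebrane_stmt0_general
    (A : Type) [CommRing A] [Algebra (ZMod 2) A]
    (deg : ℕ → Submodule (ZMod 2) A)
    (Sq : ℕ → A →ₗ[ZMod 2] A)
    (w ν : ℕ → A)
    (hν_deg : ∀ i, ν i ∈ deg i)
    (hSq_deg : ∀ i n (x : A), x ∈ deg n → Sq i x ∈ deg (n + i))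
    (hSq_vanish : ∀ n (x : A), x ∈ deg n → ∀ i, n < i → Sq i x = 0)
    (hWu_unique : ∀ i, i ≤ 11 → ∀ v ∈ deg i,
      (∀ x ∈ deg (11 - i), Sq i x = x * v) → v = ν i)
    (hWuFormula : ∀ k, w k = ∑ i ∈ Finset.range (k + 1), Sq (k - i) (ν i))
    (hBockstein : ∀ x ∈ deg 10, Sq 1 x = 0)
    (hAdem : ∀ i, Odd i → 1 < i → ∀ x : A, Sq i x = Sq 1 (Sq (i - 1) x)) :
    w 9 = 0 ∧ w 10 = 0 ∧ w 11 = 0 := by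
  have hν_top : ∀ i, 5 ≤ i → i ≤ 11 → ν i = 0 := by
    intro i h5 h11
    refine (hWu_unique i h11 0 (Submodule.zero_mem _) ?_).symm
    rcases h5.eq_or_lt with rfl | h6
    · exact isWuClass_zero_of_eq_sq_one_comp (by norm_num) (by norm_num) hSq_deg
        (hAdem 5 (by decide) (by norm_num)) hBockstein
    · exact isWuClass_zero_of_lt_two_mul (by omega) hSq_vanish
  have hw : ∀ k, 9 ≤ k → k ≤ 11 → w k = 0 := fun k h9 h11 =>
    stiefelWhitney_eq_zero_of_wu_eq_zero hν_deg hSq_vanish (hWuFormula k)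
      fun i hki hik => hν_top i (by omega) (by omega)
  exact ⟨hw 9 le_rfl (by norm_num), hw 10 (by norm_num) (by norm_num), hw 11 (by norm_num) le_rfl⟩

/-- Let `Y` be a closed orientable smooth 11-dimensional manifold. Then the
Stiefel–Whitney classes of its tangent bundle satisfy `w₉(Y) = w₁₀(Y) = w₁₁(Y) = 0` in
`H^*(Y; ℤ/2)`.

The mod 2 cohomology of the closed 11-manifold `Y` is abstracted as a graded commutative
`ℤ/2`-algebra `A` equipped with Steenrod squares `Sq`, the Stiefel–Whitney classes `w` of the
tangent bundle, and the Wu classes `ν`, subject to their standard defining properties: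
`ν i` is the unique class with `Sq i x = x * ν i` on `H^{11-i}`, Wu's formula
`w k = ∑_{i} Sq^{k-i} ν i` holds, orientability gives `w 1 = 0` and triviality of the
Bockstein `Sq¹ : H¹⁰ → H¹¹`, and the Adem relation `Sq^i = Sq¹ Sq^{i-1}` holds for odd `i`. -/
theorem ninebrane_stmt0
    (A : Type) [CommRing A] [Algebra (ZMod 2) A]
    (deg : ℕ → Submodule (ZMod 2) A)
    (Sq : ℕ → A →ₗ[ZMod 2] A)
    (w ν : ℕ → A)
    (hw_deg : ∀ i, w i ∈ deg i)
    (hν_deg : ∀ i, ν i ∈ deg i)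
    (hSq_deg : ∀ i n (x : A), x ∈ deg n → Sq i x ∈ deg (n + i))
    (hSq_vanish : ∀ n (x : A), x ∈ deg n → ∀ i, n < i → Sq i x = 0)
    (hSq_zero : ∀ (x : A), Sq 0 x = x)
    (hdim : ∀ n (x : A), 11 < n → x ∈ deg n → x = 0)
    (hν0 : ν 0 = 1)
    (hWu : ∀ i, i ≤ 11 → ∀ x ∈ deg (11 - i), Sq i x = x * ν i)
    (hWu_unique : ∀ i, i ≤ 11 → ∀ v ∈ deg i,
      (∀ x ∈ deg (11 - i), Sq i x = x * v) → v = ν i)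
    (hWuFormula : ∀ k, w k = ∑ i ∈ Finset.range (k + 1), Sq (k - i) (ν i))
    (hOrient : w 1 = 0)
    (hBockstein : ∀ x ∈ deg 10, Sq 1 x = 0)
    (hAdem : ∀ i, Odd i → 1 < i → ∀ x : A, Sq i x = Sq 1 (Sq (i - 1) x)) :
    w 9 = 0 ∧ w 10 = 0 ∧ w 11 = 0 :=
  ninebrane_stmt0_general A deg Sq w ν hν_deg hSq_deg hSq_vanish hWu_unique hWuFormula hBockstein
    hAdem
end

section
/- Let i: M ↪ Z be an embedding which is a homotopy equivalence, so that Â(Z)/Â(M) is the Pontrjagin character of an orthogonal bundle E on Z. (1) If both M and Z carry String structures ((1/2)p_1 = 0), then in degree 8: (1/6)p_2(M) = (1/6)p_2(Z) + 240·p_2(E). (2) If both M and Z carry String and Fivebrane structures ((1/2)p_1 = 0 and (1/6)p_2 = 0), then in degree 12: (1/240)p_3(M) = (1/240)p_3(Z) + 252·p_3(E). Hence a Fivebrane (resp. Ninebrane) structure on M is equivalent to a twisted Fivebrane (resp. twisted Ninebrane) structure on Z, and vice versa. -/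
/-!
Under String (and Fivebrane) conditions the lower Pontrjagin classes of `M` and `Z` vanish, so
the Â-class of each starts as `1 + c_k p_k + ⋯` with `c_2 = -1/1440`, `c_3 = -1/60480`.
Comparing `Â(Z) = Â(M) · p(E)` degree by degree then forces `p_j(E) = 0` for `j < k` and
`p_k(E) = (p_k(M) - p_k(Z)) / 1440` resp. `/ 60480`; dividing by `6` resp. `240` gives the
coefficients `240` and `252`.
-/

section PontrjaginOfQuotient

variable {A : Type*} [Ring A] [Module ℚ A]
  {p1M p2M p3M p1Z p2Z p3Z p1E p2E p3E AM4 AM8 AM12 AZ4 AZ8 AZ12 : A}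

theorem pontrjagin_one_eq_zero (hAM4 : AM4 = -((24 : ℚ)⁻¹ • p1M))
    (hAZ4 : AZ4 = -((24 : ℚ)⁻¹ • p1Z)) (hAH4 : AZ4 = AM4 + p1E)
    (hp1M : p1M = 0) (hp1Z : p1Z = 0) : p1E = 0 := by
  simpa [hAM4, hAZ4, hp1M, hp1Z] using hAH4.symm

theorem pontrjagin_two_eq (hAM8 : AM8 = (5760 : ℚ)⁻¹ • (7 * p1M ^ 2 - 4 * p2M))
    (hAZ8 : AZ8 = (5760 : ℚ)⁻¹ • (7 * p1Z ^ 2 - 4 * p2Z))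
    (hAH8 : AZ8 = AM8 + AM4 * p1E + p2E)
    (hp1M : p1M = 0) (hp1Z : p1Z = 0) (hp1E : p1E = 0) :
    p2E = (1440 : ℚ)⁻¹ • (p2M - p2Z) := by
  subst hAM8 hAZ8 hp1M hp1Z hp1E
  -- `← nsmul_eq_mul` turns the ring numerals `4 * x` into scalars that `module` can normalize
  simp only [ne_eq, OfNat.ofNat_ne_zero, not_false_eq_true, zero_pow, mul_zero, zero_sub,
    add_zero, ← Nat.cast_ofNat (R := A), ← nsmul_eq_mul] at hAH8
  linear_combination (norm := module) hAH8.symm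

theorem pontrjagin_three_eq
    (hAM12 : AM12 = (967680 : ℚ)⁻¹ • (-(31 * p1M ^ 3) + 44 * (p1M * p2M) - 16 * p3M))
    (hAZ12 : AZ12 = (967680 : ℚ)⁻¹ • (-(31 * p1Z ^ 3) + 44 * (p1Z * p2Z) - 16 * p3Z))
    (hAH12 : AZ12 = AM12 + AM8 * p1E + AM4 * p2E + p3E)
    (hp1M : p1M = 0) (hp1Z : p1Z = 0) (hp2M : p2M = 0) (hp2Z : p2Z = 0)
    (hp1E : p1E = 0) (hp2E : p2E = 0) :
    p3E = (60480 : ℚ)⁻¹ • (p3M - p3Z) := by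
  subst hAM12 hAZ12 hp1M hp1Z hp2M hp2Z hp1E hp2E
  simp only [ne_eq, OfNat.ofNat_ne_zero, not_false_eq_true, zero_pow, mul_zero, neg_zero,
    zero_sub, add_zero, ← Nat.cast_ofNat (R := A), ← nsmul_eq_mul] at hAH12
  linear_combination (norm := module) hAH12.symm

end PontrjaginOfQuotient

/-- Let `i : M ↪ Z` be an embedding which is a homotopy equivalence, so that
`Â(Z)/Â(M)` is the Pontrjagin character of an orthogonal bundle `E` on `Z`.
(1) If both `M` and `Z` carry String structures (`(1/2)p₁ = 0`), then in degree 8: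
`(1/6)p₂(M) = (1/6)p₂(Z) + 240·p₂(E)`.
(2) If both `M` and `Z` carry String and Fivebrane structures (`(1/2)p₁ = 0` and
`(1/6)p₂ = 0`), then in degree 12: `(1/240)p₃(M) = (1/240)p₃(Z) + 252·p₃(E)`.
Hence a Fivebrane (resp. Ninebrane) structure on `M` is equivalent to a twisted Fivebrane
(resp. twisted Ninebrane) structure on `Z`, and vice versa.

The rational cohomology of `Z ≃ M` is abstracted as a commutative `ℚ`-algebra `A`.  The
Â-class components of `M` and `Z` are given by the standard formulas in the Pontrjagin
classes, and the Atiyah–Hirzebruch relation `Â(Z)/Â(M) ∈ chO(Z)`, i.e.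
`Â(Z) = Â(M)·(Pontrjagin class of E)`, is imposed componentwise in degrees 4, 8, 12. -/
theorem ninebrane_stmt15
    (A : Type) [CommRing A] [Algebra ℚ A]
    (p1M p2M p3M p1Z p2Z p3Z p1E p2E p3E : A)
    (AM4 AM8 AM12 AZ4 AZ8 AZ12 : A)
    -- Â-class components of M and of Z
    (hAM4 : AM4 = -((24 : ℚ)⁻¹ • p1M))
    (hAM8 : AM8 = (5760 : ℚ)⁻¹ • (7 * p1M ^ 2 - 4 * p2M))
    (hAM12 : AM12 = (967680 : ℚ)⁻¹ • (-(31 * p1M ^ 3) + 44 * (p1M * p2M) - 16 * p3M))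
    (hAZ4 : AZ4 = -((24 : ℚ)⁻¹ • p1Z))
    (hAZ8 : AZ8 = (5760 : ℚ)⁻¹ • (7 * p1Z ^ 2 - 4 * p2Z))
    (hAZ12 : AZ12 = (967680 : ℚ)⁻¹ • (-(31 * p1Z ^ 3) + 44 * (p1Z * p2Z) - 16 * p3Z))
    -- Atiyah–Hirzebruch: Â(Z)/Â(M) is the Pontrjagin class of the orthogonal bundle E
    (hAH4 : AZ4 = AM4 + p1E)
    (hAH8 : AZ8 = AM8 + AM4 * p1E + p2E)
    (hAH12 : AZ12 = AM12 + AM8 * p1E + AM4 * p2E + p3E) :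
    ((2 : ℚ)⁻¹ • p1M = 0 → (2 : ℚ)⁻¹ • p1Z = 0 →
      (6 : ℚ)⁻¹ • p2M = (6 : ℚ)⁻¹ • p2Z + (240 : ℚ) • p2E) ∧
    ((2 : ℚ)⁻¹ • p1M = 0 → (2 : ℚ)⁻¹ • p1Z = 0 →
      (6 : ℚ)⁻¹ • p2M = 0 → (6 : ℚ)⁻¹ • p2Z = 0 →
      (240 : ℚ)⁻¹ • p3M = (240 : ℚ)⁻¹ • p3Z + (252 : ℚ) • p3E) ∧
    ((2 : ℚ)⁻¹ • p1M = 0 → (2 : ℚ)⁻¹ • p1Z = 0 →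
      ((6 : ℚ)⁻¹ • p2M = 0 ↔ (6 : ℚ)⁻¹ • p2Z + (240 : ℚ) • p2E = 0)) ∧
    ((2 : ℚ)⁻¹ • p1M = 0 → (2 : ℚ)⁻¹ • p1Z = 0 →
      (6 : ℚ)⁻¹ • p2M = 0 → (6 : ℚ)⁻¹ • p2Z = 0 →
      ((240 : ℚ)⁻¹ • p3M = 0 ↔ (240 : ℚ)⁻¹ • p3Z + (252 : ℚ) • p3E = 0)) := by
  have fivebrane : (2 : ℚ)⁻¹ • p1M = 0 → (2 : ℚ)⁻¹ • p1Z = 0 →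
      (6 : ℚ)⁻¹ • p2M = (6 : ℚ)⁻¹ • p2Z + (240 : ℚ) • p2E := by
    intro hp1M hp1Z
    rw [smul_eq_zero_iff_right (by norm_num)] at hp1M hp1Z
    have hp1E := pontrjagin_one_eq_zero hAM4 hAZ4 hAH4 hp1M hp1Z
    rw [pontrjagin_two_eq hAM8 hAZ8 hAH8 hp1M hp1Z hp1E]
    module
  have ninebrane : (2 : ℚ)⁻¹ • p1M = 0 → (2 : ℚ)⁻¹ • p1Z = 0 →
      (6 : ℚ)⁻¹ • p2M = 0 → (6 : ℚ)⁻¹ • p2Z = 0 →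
      (240 : ℚ)⁻¹ • p3M = (240 : ℚ)⁻¹ • p3Z + (252 : ℚ) • p3E := by
    intro hp1M hp1Z hp2M hp2Z
    rw [smul_eq_zero_iff_right (by norm_num)] at hp1M hp1Z hp2M hp2Z
    have hp1E := pontrjagin_one_eq_zero hAM4 hAZ4 hAH4 hp1M hp1Z
    have hp2E : p2E = 0 := by
      simpa [hp2M, hp2Z] using pontrjagin_two_eq hAM8 hAZ8 hAH8 hp1M hp1Z hp1E
    rw [pontrjagin_three_eq hAM12 hAZ12 hAH12 hp1M hp1Z hp2M hp2Z hp1E hp2E]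
    module
  exact ⟨fivebrane, ninebrane, fun hp1M hp1Z ↦ by rw [fivebrane hp1M hp1Z],
    fun hp1M hp1Z hp2M hp2Z ↦ by rw [ninebrane hp1M hp1Z hp2M hp2Z]⟩
end
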